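/- arXiv:2601.20200 — 2 statements merged into one kernel-verified Lean document; each statement's English description precedes it below -/
import Mathlib

section
/- There exist constants ρ₀ > 0 and τ > 0 such that for every ρ ∈ (0, ρ₀), every ε ∈ (0, 1], and every smooth compactly supported function u : ℝ^N → ℝ with support contained in Ω, u ≥ 0, ∫_{ℝ^N} u² dx = ρ, and ∫_{ℝ^N} |∇u|² dx = τ², one has J_ε(u) > 0. -/
open MeasureTheory Set ENNReal NNReal Module

lemma rpow_le_one_add {a e : ℝ} (ha : 0 ≤ a) (he0 : 0 ≤ e) (he1 : e ≤ 1) : a ^ e ≤ 1 + a := by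
  rcases le_total a 1 with h | h
  · calc a ^ e ≤ 1 := Real.rpow_le_one ha h he0
    _ ≤ 1 + a := by linarith
  · calc a ^ e ≤ a ^ (1:ℝ) := Real.rpow_le_rpow_of_exponent_le h he1
    _ = a := Real.rpow_one a
    _ ≤ 1 + a := by linarith

lemma sobolev_real (N : ℕ) (hN : 3 ≤ N) (u : EuclideanSpace ℝ (Fin N) → ℝ)
    (hu : ContDiff ℝ 1 u) (hcs : HasCompactSupport u) (hu0 : ∀ x, 0 ≤ u x)
    {q' : ℝ} (hq' : q' = 2 * N / ((N:ℝ) - 2)) :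
    ∫ x, u x ^ q' ≤ ((SNormLESNormFDerivOfEqConst ℝ
        (volume : Measure (EuclideanSpace ℝ (Fin N))) ((2:ℝ≥0):ℝ) : ℝ)
      * (∫ x, ‖fderiv ℝ u x‖ ^ 2) ^ ((2:ℝ)⁻¹)) ^ q' := by
  have hN2 : (0:ℝ) < (N:ℝ) - 2 := by
    have : (3:ℝ) ≤ (N:ℝ) := by exact_mod_cast hN
    linarith
  have hNpos : (0:ℝ) < (N:ℝ) := by linarith
  have hq'pos : 0 < q' := by
    rw [hq']
    exact div_pos (by linarith) (by linarith)
  set M : ℝ≥0 := SNormLESNormFDerivOfEqConst ℝ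
        (volume : Measure (EuclideanSpace ℝ (Fin N))) ((2:ℝ≥0):ℝ) with hM
  set p' : ℝ≥0 := ⟨q', hq'pos.le⟩ with hp'def
  have hfinrank : finrank ℝ (EuclideanSpace ℝ (Fin N)) = N := finrank_euclideanSpace_fin
  have hn : 0 < finrank ℝ (EuclideanSpace ℝ (Fin N)) := by rw [hfinrank]; omega
  have hp' : ((p' : ℝ))⁻¹ = ((2:ℝ≥0) : ℝ)⁻¹ - ((finrank ℝ (EuclideanSpace ℝ (Fin N)) : ℕ) : ℝ)⁻¹ := by
    rw [hfinrank]
    show q'⁻¹ = (2:ℝ)⁻¹ - ((N:ℝ))⁻¹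
    rw [hq']
    field_simp
  have key := eLpNorm_le_eLpNorm_fderiv_of_eq (F := ℝ)
    (μ := (volume : Measure (EuclideanSpace ℝ (Fin N)))) hu hcs
    (p := 2) (p' := p') one_le_two hn hp'
  have hcontu : Continuous u := hu.continuous
  have hmemu : MemLp u ((p' : ℝ≥0∞)) volume := hcontu.memLp_of_hasCompactSupport hcs
  have hfcont : Continuous (fderiv ℝ u) := hu.continuous_fderiv one_ne_zero
  have hfcs : HasCompactSupport (fderiv ℝ u) := hcs.fderiv (𝕜 := ℝ)
  have hmemf : MemLp (fderiv ℝ u) (((2:ℝ≥0) : ℝ≥0∞)) volume :=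
    hfcont.memLp_of_hasCompactSupport hfcs
  have hp'ne : p' ≠ 0 := by
    rw [← NNReal.coe_ne_zero]; exact hq'pos.ne'
  have hp'ne0 : ((p' : ℝ≥0∞)) ≠ 0 := ENNReal.coe_ne_zero.mpr hp'ne
  have hIg : (0:ℝ) ≤ ∫ x, ‖fderiv ℝ u x‖ ^ 2 := integral_nonneg fun x => by positivity
  set R : ℝ := (∫ x, ‖fderiv ℝ u x‖ ^ 2) ^ ((2:ℝ)⁻¹) with hR
  have hRnn : 0 ≤ R := Real.rpow_nonneg hIg _
  have h1 : eLpNorm u ((p' : ℝ≥0∞)) volume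
      = ENNReal.ofReal ((∫ x, u x ^ q') ^ (q'⁻¹)) := by
    rw [hmemu.eLpNorm_eq_integral_rpow_norm hp'ne0 ENNReal.coe_ne_top]
    have e1 : ((p':ℝ≥0∞)).toReal = q' := (ENNReal.coe_toReal p').trans rfl
    rw [e1]
    have e2 : (fun x => ‖u x‖ ^ q') = fun x : EuclideanSpace ℝ (Fin N) => u x ^ q' :=
      funext fun x => by rw [Real.norm_of_nonneg (hu0 x)]
    rw [e2]
  have h2 : eLpNorm (fderiv ℝ u) (((2:ℝ≥0) : ℝ≥0∞)) volume = ENNReal.ofReal R := by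
    rw [hmemf.eLpNorm_eq_integral_rpow_norm (by norm_num) (by norm_num)]
    have e1 : (((2:ℝ≥0):ℝ≥0∞)).toReal = (2:ℝ) := by norm_num
    rw [e1]
    have e2 : (fun x => ‖fderiv ℝ u x‖ ^ (2:ℝ))
        = fun x : EuclideanSpace ℝ (Fin N) => ‖fderiv ℝ u x‖ ^ (2:ℕ) :=
      funext fun x => Real.rpow_two _
    rw [e2, hR]
  rw [h1, h2, ← ENNReal.ofReal_coe_nnreal, ← ENNReal.ofReal_mul M.coe_nonneg] at key
  have hL : (∫ x, u x ^ q') ^ (q'⁻¹) ≤ (M:ℝ) * R :=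
    (ENNReal.ofReal_le_ofReal_iff (by positivity)).mp key
  have hInt_nonneg : 0 ≤ ∫ x, u x ^ q' :=
    integral_nonneg fun x => Real.rpow_nonneg (hu0 x) _
  calc ∫ x, u x ^ q' = ((∫ x, u x ^ q') ^ (q'⁻¹)) ^ q' := by
        rw [← Real.rpow_mul hInt_nonneg, inv_mul_cancel₀ hq'pos.ne', Real.rpow_one]
    _ ≤ ((M:ℝ) * R) ^ q' :=
        Real.rpow_le_rpow (Real.rpow_nonneg hInt_nonneg _) hL hq'pos.le

lemma holder_interp (N : ℕ) (u : EuclideanSpace ℝ (Fin N) → ℝ)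
    (hcont : Continuous u) (hcs : HasCompactSupport u) (hu0 : ∀ x, 0 ≤ u x)
    {p q' θ : ℝ} (hθ0 : 0 < θ) (hθ1 : θ < 1) (hq'0 : 0 < q')
    (hexp : 2 * θ + q' * (1 - θ) = p) (hp0 : 0 < p) :
    ∫ x, u x ^ p ≤ (∫ x, u x ^ (2:ℕ)) ^ θ * (∫ x, u x ^ q') ^ (1 - θ) := by
  have h1θ : 0 < 1 - θ := by linarith
  have hinv : 0 < θ⁻¹ := inv_pos.mpr hθ0
  have hst : Real.HolderConjugate θ⁻¹ (1-θ)⁻¹ := by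
    constructor
    · rw [inv_inv, inv_inv, inv_one]; ring
    · exact hinv
    · exact inv_pos.mpr h1θ
  set f : EuclideanSpace ℝ (Fin N) → ℝ := fun x => u x ^ (2*θ) with hf
  set g : EuclideanSpace ℝ (Fin N) → ℝ := fun x => u x ^ (q'*(1-θ)) with hg
  have hfc : Continuous f := hcont.rpow_const (fun x => Or.inr (by positivity))
  have hgc : Continuous g := hcont.rpow_const (fun x => Or.inr (by positivity))
  have hfcs : HasCompactSupport f := hcs.rpow_const (by positivity : (0:ℝ) < 2*θ).ne'
  have hgcs : HasCompactSupport g := hcs.rpow_const (by positivity : (0:ℝ) < q'*(1-θ)).ne'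
  have hfm : MemLp f (ENNReal.ofReal θ⁻¹) volume := hfc.memLp_of_hasCompactSupport hfcs
  have hgm : MemLp g (ENNReal.ofReal (1-θ)⁻¹) volume := hgc.memLp_of_hasCompactSupport hgcs
  have hfnn : 0 ≤ᵐ[volume] f :=
    Filter.Eventually.of_forall fun x => Real.rpow_nonneg (hu0 x) _
  have hgnn : 0 ≤ᵐ[volume] g :=
    Filter.Eventually.of_forall fun x => Real.rpow_nonneg (hu0 x) _
  have H := integral_mul_le_Lp_mul_Lq_of_nonneg hst hfnn hgnn hfm hgm
  simp only [one_div, inv_inv] at H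
  have ef : (fun x => f x * g x) = fun x : EuclideanSpace ℝ (Fin N) => u x ^ p := by
    funext x
    rw [hf, hg, ← Real.rpow_add' (hu0 x) (by rw [hexp]; exact hp0.ne'), hexp]
  have efs : (fun x => f x ^ θ⁻¹) = fun x : EuclideanSpace ℝ (Fin N) => u x ^ (2:ℕ) := by
    funext x
    rw [hf, ← Real.rpow_mul (hu0 x), mul_assoc, mul_inv_cancel₀ hθ0.ne', mul_one,
      Real.rpow_two]
  have egt : (fun x => g x ^ (1-θ)⁻¹) = fun x : EuclideanSpace ℝ (Fin N) => u x ^ q' := by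
    funext x
    rw [hg, ← Real.rpow_mul (hu0 x), mul_assoc, mul_inv_cancel₀ h1θ.ne', mul_one]
  rw [ef, efs, egt] at H
  exact H

set_option maxHeartbeats 2000000 in
/-- There exist constants ρ₀ > 0 and τ > 0 such that for every ρ ∈ (0, ρ₀),
every ε ∈ (0, 1], and every smooth compactly supported function u : ℝ^N → ℝ with support
contained in Ω, u ≥ 0, ∫ u² = ρ, and ∫ |∇u|² = τ², one has J_ε(u) > 0. -/
theorem stmt_0 (N : ℕ) (hN : 3 ≤ N)
    (Ω : Set (EuclideanSpace ℝ (Fin N))) (hΩne : Ω.Nonempty) (hΩopen : IsOpen Ω)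
    (hΩbdd : Bornology.IsBounded Ω)
    (r : ℝ) (hr0 : 0 < r) (hr1 : r < 1)
    (p : ℝ) (hp1 : 2 + 4 / (N : ℝ) < p) (hp2 : p < 2 * N / ((N : ℝ) - 2)) :
    ∃ ρ₀ > (0 : ℝ), ∃ τ > (0 : ℝ),
      ∀ ρ ∈ Ioo (0 : ℝ) ρ₀, ∀ ε ∈ Ioc (0 : ℝ) 1,
        ∀ u : EuclideanSpace ℝ (Fin N) → ℝ,
          ContDiff ℝ (⊤ : ℕ∞) u → HasCompactSupport u → tsupport u ⊆ Ω →
          (∀ x, 0 ≤ u x) →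
          (∫ x, (u x) ^ 2) = ρ →
          (∫ x, ‖fderiv ℝ u x‖ ^ 2) = τ ^ 2 →
          0 < (1 / 2) * (∫ x, ‖fderiv ℝ u x‖ ^ 2)
              - (1 / (1 - r)) * (∫ x in Ω, (u x + ε) ^ (1 - r))
              - (1 / p) * (∫ x, (u x) ^ p) := by
  have hN3 : (3:ℝ) ≤ (N:ℝ) := by exact_mod_cast hN
  have hN2 : (0:ℝ) < (N:ℝ) - 2 := by linarith
  have hNpos : (0:ℝ) < (N:ℝ) := by linarith
  obtain ⟨q', hq'⟩ : ∃ q', q' = 2 * (N:ℝ) / ((N:ℝ) - 2) := ⟨_, rfl⟩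
  rw [← hq'] at hp2
  have hq'pos : 0 < q' := by
    rw [hq']
    exact div_pos (by linarith) (by linarith)
  have hp_gt2 : 2 < p := by
    have : 0 < 4 / (N:ℝ) := by positivity
    linarith
  have hq'_gt2 : 2 < q' := lt_trans hp_gt2 hp2
  obtain ⟨θ, hθ⟩ : ∃ θ, θ = (q' - p) / (q' - 2) := ⟨_, rfl⟩
  have hθ0 : 0 < θ := hθ ▸ div_pos (by linarith) (by linarith)
  have hθ1 : θ < 1 := by
    rw [hθ, div_lt_one (by linarith)]; linarith
  have hexp : 2 * θ + q' * (1 - θ) = p := by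
    have h2 : q' - 2 ≠ 0 := by linarith
    have h : (q' - 2) * θ = q' - p := by
      rw [hθ]; field_simp
    nlinarith [h]
  obtain ⟨M, hM⟩ : ∃ M, M = ((SNormLESNormFDerivOfEqConst ℝ
      (volume : Measure (EuclideanSpace ℝ (Fin N))) ((2:ℝ≥0):ℝ)) : ℝ) := ⟨_, rfl⟩
  have hM0 : (0:ℝ) ≤ M := hM ▸ NNReal.coe_nonneg _
  obtain ⟨V, hV⟩ : ∃ V, V = (volume Ω).toReal := ⟨_, rfl⟩
  have hV0 : (0:ℝ) ≤ V := hV ▸ ENNReal.toReal_nonneg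
  have hr1' : (0:ℝ) < 1 - r := by linarith
  obtain ⟨A, hA⟩ : ∃ A, A = (1/(1-r)) * (3*V + 1) := ⟨_, rfl⟩
  have hA0 : (0:ℝ) ≤ A := by rw [hA]; positivity
  obtain ⟨τ, hτ⟩ : ∃ τ, τ = Real.sqrt (2*A + 4) := ⟨_, rfl⟩
  have hτ0 : 0 < τ := hτ ▸ Real.sqrt_pos.mpr (by linarith)
  have hτsq : τ^2 = 2*A+4 := by rw [hτ]; exact Real.sq_sqrt (by linarith)
  obtain ⟨D, hD⟩ : ∃ D, D = ((M * τ) ^ q') ^ (1 - θ) := ⟨_, rfl⟩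
  have hD0 : (0:ℝ) ≤ D := by
    rw [hD]; exact Real.rpow_nonneg (Real.rpow_nonneg (by positivity) _) _
  refine ⟨min 1 ((1/(D+1)) ^ θ⁻¹), ?_, τ, hτ0, ?_⟩
  · have : (0:ℝ) < (1/(D+1)) ^ θ⁻¹ := Real.rpow_pos_of_pos (by positivity) _
    exact lt_min one_pos this
  rintro ρ ⟨hρ0, hρ1⟩ ε ⟨hε0, hε1⟩ u hu hcs hsupp hu0 hL2 hgrad
  have hρle1 : ρ ≤ 1 := le_of_lt (lt_of_lt_of_le hρ1 (min_le_left _ _))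
  have hcont : Continuous u := hu.continuous
  have hu1 : ContDiff ℝ 1 u := hu.of_le (by simp)
  have hIu2 : Integrable (fun x => u x ^ 2) volume :=
    (hcont.memLp_of_hasCompactSupport (p := 2) hcs).integrable_sq
  -- Sobolev bound
  have hSob := sobolev_real N hN u hu1 hcs hu0 hq'
  rw [hgrad, ← hM] at hSob
  have hτconv : ((τ:ℝ)^2) ^ ((2:ℝ)⁻¹) = τ := by
    rw [← Real.rpow_natCast τ 2, ← Real.rpow_mul hτ0.le]
    norm_num
  rw [hτconv] at hSob
  -- Hölder interpolation
  have hHold := holder_interp N u hcont hcs hu0 hθ0 hθ1 hq'pos hexp (by linarith)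
  rw [hL2] at hHold
  have hPnn : 0 ≤ ∫ x, u x ^ p := integral_nonneg fun x => Real.rpow_nonneg (hu0 x) _
  have hq'nn : 0 ≤ ∫ x, u x ^ q' := integral_nonneg fun x => Real.rpow_nonneg (hu0 x) _
  have h2 : (∫ x, u x ^ q') ^ (1-θ) ≤ D := by
    rw [hD]
    exact Real.rpow_le_rpow hq'nn hSob (by linarith)
  have h3 : ρ ^ θ ≤ 1/(D+1) := by
    calc ρ ^ θ ≤ ((1/(D+1)) ^ θ⁻¹) ^ θ :=
          Real.rpow_le_rpow hρ0.le (le_trans hρ1.le (min_le_right _ _)) hθ0.le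
      _ = 1/(D+1) := by
          rw [← Real.rpow_mul (by positivity), inv_mul_cancel₀ hθ0.ne', Real.rpow_one]
  have hP1 : (∫ x, u x ^ p) ≤ 1 := by
    have hDD : (0:ℝ) < D + 1 := by linarith
    calc (∫ x, u x ^ p) ≤ ρ ^ θ * (∫ x, u x ^ q') ^ (1-θ) := hHold
      _ ≤ (1/(D+1)) * D := by
          apply mul_le_mul h3 h2 (Real.rpow_nonneg hq'nn _) (by positivity)
      _ = D / (D+1) := by ring
      _ ≤ 1 := (div_le_one hDD).mpr (by linarith)
  -- singular term
  have hmeasΩ : volume Ω ≠ ⊤ := hΩbdd.measure_lt_top.ne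
  obtain ⟨C, hC⟩ := hcs.exists_bound_of_continuous hcont
  have hbound : ∀ x, (u x + ε) ^ (1-r) ≤ 3 + u x ^ 2 := by
    intro x
    have h1 := rpow_le_one_add (show (0:ℝ) ≤ u x + ε by linarith [hu0 x])
      hr1'.le (by linarith)
    nlinarith [hu0 x, sq_nonneg (u x - 1)]
  have hsing_cont : Continuous (fun x : EuclideanSpace ℝ (Fin N) => (u x + ε) ^ (1-r)) :=
    (hcont.add continuous_const).rpow_const (fun x => Or.inr hr1'.le)
  have hIsing : IntegrableOn (fun x => (u x + ε) ^ (1-r)) Ω volume := by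
    apply Measure.integrableOn_of_bounded (M := 2 + C) hmeasΩ hsing_cont.aestronglyMeasurable
    refine Filter.Eventually.of_forall fun x => ?_
    rw [Real.norm_of_nonneg (Real.rpow_nonneg (by linarith [hu0 x]) _)]
    have h1 := rpow_le_one_add (show (0:ℝ) ≤ u x + ε by linarith [hu0 x]) hr1'.le (by linarith)
    have h2 : u x ≤ C := le_trans (le_abs_self _) (by simpa using hC x)
    linarith
  have hIconst : IntegrableOn (fun _ : EuclideanSpace ℝ (Fin N) => (3:ℝ)) Ω volume :=
    integrableOn_const hmeasΩ
  have hS1 : (∫ x in Ω, (u x + ε) ^ (1-r)) ≤ ∫ x in Ω, (3 + u x ^ 2) :=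
    setIntegral_mono_on hIsing (hIconst.add hIu2.integrableOn) hΩopen.measurableSet
      (fun x _ => hbound x)
  have hS2 : (∫ x in Ω, (3 + u x ^ 2)) = 3 * V + ∫ x in Ω, u x ^ 2 := by
    rw [integral_add hIconst hIu2.integrableOn, setIntegral_const, hV]
    rw [smul_eq_mul, mul_comm]
    rfl
  have hS3 : (∫ x in Ω, u x ^ 2) ≤ ρ := by
    rw [← hL2]
    exact setIntegral_le_integral hIu2 (Filter.Eventually.of_forall fun x => sq_nonneg _)
  have hSle : (1/(1-r)) * (∫ x in Ω, (u x + ε) ^ (1-r)) ≤ A := by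
    rw [hA]
    apply mul_le_mul_of_nonneg_left _ (by positivity)
    linarith
  have hPle : (1/p) * (∫ x, u x ^ p) ≤ 1 := by
    have h1p : (0:ℝ) < 1/p := by positivity
    have h1p' : 1/p ≤ 1 := by
      rw [div_le_one (by linarith)]; linarith
    calc (1/p) * (∫ x, u x ^ p) ≤ 1 * 1 := mul_le_mul h1p' hP1 hPnn (by norm_num)
      _ = 1 := by norm_num
  rw [hgrad]
  linarith [hτsq]
end

section
/- Let u : X → ℝ be a nonnegative measurable function with ∫_X u² dμ = ρ, and let ε ∈ (0, 1]. Then ∫_X (u+ε)^{−r} · u dμ ≤ ∫_X (u+ε)^{1−r} dμ ≤ 2^{1−r} μ(X) + 2^{1−r} μ(X)^{(1+r)/2} ρ^{(1−r)/2}. -/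
/-!
Since `(u + ε)^{-r} u ≤ (u + ε)^{1-r}`, the first inequality is pointwise. For the second,
`u + ε ≤ 2 max(u, 1)` gives `(u + ε)^{1-r} ≤ 2^{1-r} (1 + u^{1-r})`, and Hölder's inequality
with exponents `2/(1-r)` and `2/(1+r)` bounds `∫ u^{1-r}` by `ρ^{(1-r)/2} μ(X)^{(1+r)/2}`.
-/

open MeasureTheory Set
open scoped ENNReal

namespace Real

lemma rpow_neg_mul_le_rpow_one_sub {a b r : ℝ} (hb : 0 < b) (hab : a ≤ b) :
    b ^ (-r) * a ≤ b ^ (1 - r) :=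
  calc b ^ (-r) * a ≤ b ^ (-r) * b := by gcongr
    _ = b ^ (1 - r) := by rw [sub_eq_neg_add, rpow_add_one hb.ne']

lemma add_rpow_le_two_rpow_mul_one_add_rpow {a ε s : ℝ} (ha : 0 ≤ a) (hε0 : 0 ≤ ε)
    (hε1 : ε ≤ 1) (hs : 0 ≤ s) : (a + ε) ^ s ≤ 2 ^ s * (1 + a ^ s) :=
  calc (a + ε) ^ s ≤ (2 * max a 1) ^ s := by
        gcongr
        linarith [le_max_left a 1, le_max_right a 1]
    _ = 2 ^ s * max (a ^ s) 1 := by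
        rw [mul_rpow zero_le_two (by positivity), rpow_max ha zero_le_one hs, one_rpow]
    _ ≤ 2 ^ s * (1 + a ^ s) := by
        gcongr
        exact max_le (le_add_of_nonneg_left zero_le_one) (le_add_of_nonneg_right (by positivity))

end Real

namespace MeasureTheory

variable {X : Type*} [MeasurableSpace X] {μ : Measure X}

lemma lintegral_rpow_le_lintegral_rpow_mul_measure_univ {f : X → ℝ≥0∞}
    (hf : AEMeasurable f μ) {s t : ℝ} (hs : 0 ≤ s) (ht : 0 < t) (hst : s ≤ t) :
    ∫⁻ x, f x ^ s ∂μ ≤ (∫⁻ x, f x ^ t ∂μ) ^ (s / t) * μ univ ^ (1 - s / t) := by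
  have hθ1 : s / t ≤ 1 := (div_le_one ht).2 hst
  have := ENNReal.lintegral_mul_norm_pow_le (hf.pow_const t) (aemeasurable_const (b := 1))
    (div_nonneg hs ht.le) (sub_nonneg.2 hθ1) (add_sub_cancel _ _)
  simpa [← ENNReal.rpow_mul, mul_div_cancel₀ s ht.ne'] using this

lemma lintegral_ofReal_add_rpow_le {u : X → ℝ} (hu : Measurable u) (hnn : ∀ x, 0 ≤ u x)
    {ε s : ℝ} (hε0 : 0 < ε) (hε1 : ε ≤ 1) (hs0 : 0 ≤ s) (hs2 : s ≤ 2) :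
    ∫⁻ x, ENNReal.ofReal ((u x + ε) ^ s) ∂μ ≤ ENNReal.ofReal (2 ^ s) *
      (μ univ + (∫⁻ x, ENNReal.ofReal (u x ^ 2) ∂μ) ^ (s / 2) * μ univ ^ (1 - s / 2)) := by
  have hpointwise : ∀ x, ENNReal.ofReal ((u x + ε) ^ s)
      ≤ ENNReal.ofReal (2 ^ s) * (1 + ENNReal.ofReal (u x) ^ s) := fun x => by
    rw [← ENNReal.ofReal_one, ENNReal.ofReal_rpow_of_nonneg (hnn x) hs0,
      ← ENNReal.ofReal_add zero_le_one (Real.rpow_nonneg (hnn x) s),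
      ← ENNReal.ofReal_mul (by positivity)]
    exact ENNReal.ofReal_le_ofReal
      (Real.add_rpow_le_two_rpow_mul_one_add_rpow (hnn x) hε0.le hε1 hs0)
  have hsq : ∀ x, ENNReal.ofReal (u x) ^ (2 : ℝ) = ENNReal.ofReal (u x ^ 2) := fun x => by
    rw [ENNReal.rpow_two, ENNReal.ofReal_pow (hnn x)]
  calc ∫⁻ x, ENNReal.ofReal ((u x + ε) ^ s) ∂μ
      ≤ ∫⁻ x, ENNReal.ofReal (2 ^ s) * (1 + ENNReal.ofReal (u x) ^ s) ∂μ :=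
        lintegral_mono hpointwise
    _ = ENNReal.ofReal (2 ^ s) * (μ univ + ∫⁻ x, ENNReal.ofReal (u x) ^ s ∂μ) := by
        rw [lintegral_const_mul _ (by fun_prop), lintegral_add_left measurable_const,
          lintegral_one]
    _ ≤ _ := by
        gcongr
        simpa only [hsq] using lintegral_rpow_le_lintegral_rpow_mul_measure_univ
          hu.ennreal_ofReal.aemeasurable hs0 two_pos hs2

end MeasureTheory

/-- If u : X → ℝ is a nonnegative measurable function with ∫ u² dμ = ρ on a
finite measure space and ε ∈ (0,1], then
∫ (u+ε)^{−r} u dμ ≤ ∫ (u+ε)^{1−r} dμ ≤ 2^{1−r} μ(X) + 2^{1−r} μ(X)^{(1+r)/2} ρ^{(1−r)/2}. -/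
theorem stmt_6 {X : Type*} [MeasurableSpace X] (μ : Measure X) [IsFiniteMeasure μ]
    (r : ℝ) (hr0 : 0 < r) (hr1 : r < 1) (ρ : ℝ) (hρ : 0 ≤ ρ)
    (u : X → ℝ) (hu : Measurable u) (hnn : ∀ x, 0 ≤ u x)
    (hmass : ∫⁻ x, ENNReal.ofReal ((u x) ^ 2) ∂μ = ENNReal.ofReal ρ)
    (ε : ℝ) (hε : ε ∈ Ioc (0 : ℝ) 1) :
    (∫⁻ x, ENNReal.ofReal ((u x + ε) ^ (-r) * u x) ∂μ
        ≤ ∫⁻ x, ENNReal.ofReal ((u x + ε) ^ (1 - r)) ∂μ) ∧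
      ∫⁻ x, ENNReal.ofReal ((u x + ε) ^ (1 - r)) ∂μ
        ≤ ENNReal.ofReal (2 ^ (1 - r) * (μ univ).toReal
            + 2 ^ (1 - r) * (μ univ).toReal ^ ((1 + r) / 2) * ρ ^ ((1 - r) / 2)) := by
  obtain ⟨hε0, hε1⟩ := hε
  refine ⟨lintegral_mono fun x => ENNReal.ofReal_le_ofReal ?_, ?_⟩
  · exact Real.rpow_neg_mul_le_rpow_one_sub (by linarith [hnn x]) (by linarith)
  refine (lintegral_ofReal_add_rpow_le hu hnn hε0 hε1 (by linarith) (by linarith)).trans_eq ?_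
  have hμ : (0 : ℝ) ≤ (μ univ).toReal := ENNReal.toReal_nonneg
  rw [hmass, show 1 - (1 - r) / 2 = (1 + r) / 2 by ring,
    ENNReal.ofReal_add (by positivity) (by positivity), ENNReal.ofReal_mul (by positivity),
    ENNReal.ofReal_mul (by positivity), ENNReal.ofReal_mul (by positivity),
    ← ENNReal.ofReal_rpow_of_nonneg hμ (by linarith),
    ← ENNReal.ofReal_rpow_of_nonneg hρ (by linarith),
    ENNReal.ofReal_toReal (measure_ne_top μ univ)]
  ring
end
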